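/- The function U : ℝ² → ℝ, U(x) := −2·log(1 + |x|²/8), is smooth, satisfies U ≤ 0 on ℝ² with U(0) = 0, solves −ΔU(x) = e^{U(x)} for every x ∈ ℝ², and ∫_{ℝ²} e^{U(x)} dx = 8π. -/

import Mathlib

open MeasureTheory Real Set Filter Topology Metric

noncomputable section

/-- The Euclidean plane. -/
abbrev R2 : Type := EuclideanSpace ℝ (Fin 2)

/-- The Laplacian: sum of the two pure second directional derivatives. -/
def lap (u : R2 → ℝ) (x : R2) : ℝ :=
  ∑ i : Fin 2,
    fderiv ℝ (fun y => fderiv ℝ u y (EuclideanSpace.single i 1)) x (EuclideanSpace.single i 1)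

/-- Each point of ∂Ω has a neighborhood in which ∂Ω is the graph of a C^∞ function
(in suitable Euclidean coordinates). -/
def SmoothBoundary (Ω : Set R2) : Prop :=
  ∀ x ∈ frontier Ω, ∃ V : Set R2, IsOpen V ∧ x ∈ V ∧
    ∃ (e : R2 ≃ᵢ R2) (g : ℝ → ℝ), ContDiff ℝ (⊤ : ℕ∞) g ∧
      frontier Ω ∩ V = {y | y ∈ V ∧ e y 1 = g (e y 0)}

/-- A (classical) solution of the Lane–Emden problem `(𝒫_p)` on Ω. -/
def IsSolution (Ω : Set R2) (p : ℝ) (u : R2 → ℝ) : Prop :=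
  ContDiffOn ℝ 2 u Ω ∧ ContDiffOn ℝ 1 u (closure Ω) ∧
  (∀ x ∈ Ω, -lap u x = |u x| ^ (p - 1) * u x) ∧
  (∀ x ∈ frontier Ω, u x = 0)

/-- A nodal (sign-changing) function on Ω. -/
def IsNodal (Ω : Set R2) (u : R2 → ℝ) : Prop :=
  (∃ x ∈ Ω, 0 < u x) ∧ ∃ x ∈ Ω, u x < 0

/-- The energy functional E_p. -/
def energy (Ω : Set R2) (p : ℝ) (u : R2 → ℝ) : ℝ :=
  (1 / 2) * ∫ x in Ω, ‖gradient u x‖ ^ 2 - (1 / (p + 1)) * ∫ x in Ω, |u x| ^ (p + 1)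

/-- Condition (A): p·∫_Ω |∇u_p|² → 16πe. -/
def CondA (Ω : Set R2) (u : ℝ → R2 → ℝ) : Prop :=
  Tendsto (fun p : ℝ => p * ∫ x in Ω, ‖gradient (u p) x‖ ^ 2) atTop
    (𝓝 (16 * π * Real.exp 1))

/-- Condition (B): p·(u_p(x_p⁺) + u_p(x_p⁻)) → K for some K ≥ 0. -/
def CondB (u : ℝ → R2 → ℝ) (xp xm : ℝ → R2) : Prop :=
  ∃ K : ℝ, 0 ≤ K ∧ Tendsto (fun p : ℝ => p * (u p (xp p) + u p (xm p))) atTop (𝓝 K)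

/-- ε_p := (p·u_p(x_p⁺)^{p−1})^{−1/2}. -/
def eps (u : ℝ → R2 → ℝ) (xp : ℝ → R2) (p : ℝ) : ℝ :=
  1 / Real.sqrt (p * u p (xp p) ^ (p - 1))

/-- The rescaling z_p of u_p around x_p⁺. -/
def zp (u : ℝ → R2 → ℝ) (xp : ℝ → R2) (p : ℝ) (x : R2) : ℝ :=
  (p / u p (xp p)) * (u p (eps u xp p • x + xp p) - u p (xp p))

/-- The rescaling z_p⁻ of u_p around x_p⁻ (with the scale ε_p of the maximum). -/
def zm (u : ℝ → R2 → ℝ) (xp xm : ℝ → R2) (p : ℝ) (x : R2) : ℝ :=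
  (p / u p (xp p)) * (-u p (eps u xp p • x + xm p) - u p (xp p))

/-- Convergence in C²_loc(ℝ²) of a family of functions f_i defined on sets D_i:
every compact set K is eventually contained in D_i, and on K all derivatives up to
order 2 converge uniformly. -/
def TendstoC2loc {ι : Type} (l : Filter ι) (D : ι → Set R2) (f : ι → R2 → ℝ)
    (g : R2 → ℝ) : Prop :=
  ∀ K : Set R2, IsCompact K →
    (∀ᶠ i in l, K ⊆ D i) ∧
    ∀ n : ℕ, n ≤ 2 →
      TendstoUniformlyOn (fun i x => iteratedFDeriv ℝ n (f i) x)
        (fun x => iteratedFDeriv ℝ n g x) l K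

/-- The standard bubble U(x) = −2 log(1 + |x|²/8). -/
def stdBubble (x : R2) : ℝ := -2 * Real.log (1 + ‖x‖ ^ 2 / 8)

/-- The bubble U_μ(x) = log(μ/(1 + μ|x|²/8)²). -/
def bubble (μ : ℝ) (x : R2) : ℝ := Real.log (μ / (1 + μ * ‖x‖ ^ 2 / 8) ^ 2)

/-- A C^∞ function compactly supported in S. -/
def CcSmoothIn (S : Set R2) (v : R2 → ℝ) : Prop :=
  ContDiff ℝ (⊤ : ℕ∞) v ∧ HasCompactSupport v ∧ tsupport v ⊆ S

/-- The quadratic form of the linearized operator at u. -/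
def Qform (p : ℝ) (u v : R2 → ℝ) : ℝ :=
  ∫ x, (‖gradient v x‖ ^ 2 - p * |u x| ^ (p - 1) * v x ^ 2)

/-- Morse index one hypothesis (M): for p large, the quadratic form of the linearized
operator is negative somewhere on C_c^∞ of the positive nodal domain, but is not
negative definite on any 2-dimensional subspace. -/
def MorseOne (Ω : Set R2) (u : ℝ → R2 → ℝ) : Prop :=
  ∀ᶠ p : ℝ in atTop,
    (∃ v : R2 → ℝ, CcSmoothIn {x ∈ Ω | 0 < u p x} v ∧ Qform p (u p) v < 0) ∧
    ¬ ∃ v w : R2 → ℝ, CcSmoothIn {x ∈ Ω | 0 < u p x} v ∧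
        CcSmoothIn {x ∈ Ω | 0 < u p x} w ∧
        LinearIndependent ℝ ![v, w] ∧
        ∀ a b : ℝ, ¬(a = 0 ∧ b = 0) →
          Qform p (u p) (fun x => a * v x + b * w x) < 0

lemma contDiff_stdBubble : ContDiff ℝ (⊤ : ℕ∞) stdBubble := by
  rw [contDiff_iff_contDiffAt]
  intro x
  have h : ContDiffAt ℝ (⊤ : ℕ∞) (fun y : R2 => 1 + ‖y‖ ^ 2 / 8) x :=
    (contDiff_const.add ((contDiff_norm_sq ℝ).div_const 8)).contDiffAt
  exact contDiffAt_const.mul (h.log (by positivity))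

lemma exp_stdBubble (x : R2) : Real.exp (stdBubble x) = 64 / (8 + ‖x‖ ^ 2) ^ 2 := by
  have h : (0:ℝ) < 1 + ‖x‖ ^ 2 / 8 := by positivity
  have : Real.exp (stdBubble x) = ((1 + ‖x‖ ^ 2 / 8) ^ 2)⁻¹ := by
    rw [stdBubble, show (-2 : ℝ) * Real.log (1 + ‖x‖ ^ 2 / 8)
        = -(2 * Real.log (1 + ‖x‖ ^ 2 / 8)) by ring,
      Real.exp_neg, show (2:ℝ) = ((2:ℕ):ℝ) by norm_num, Real.exp_nat_mul, Real.exp_log h]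
  rw [this]
  field_simp
  ring

lemma hasFDerivAt_stdBubble (x : R2) :
    HasFDerivAt stdBubble ((-4 / (8 + ‖x‖ ^ 2)) • (innerSL ℝ x)) x := by
  have hq : HasFDerivAt (fun y : R2 => ‖y‖ ^ 2) (2 • (innerSL ℝ x)) x :=
    (hasStrictFDerivAt_norm_sq x).hasFDerivAt
  have h1 : (0:ℝ) < 1 + ‖x‖ ^ 2 / 8 := by positivity
  have hin : HasDerivAt (fun t : ℝ => 1 + t / 8) (1/8) (‖x‖ ^ 2) := by
    simpa using ((hasDerivAt_id (‖x‖ ^ 2)).div_const 8).const_add 1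
  have hl : HasDerivAt (fun t : ℝ => -2 * Real.log (1 + t / 8))
      (-2 * ((1/8) / (1 + ‖x‖ ^ 2 / 8))) (‖x‖ ^ 2) :=
    (hin.log h1.ne').const_mul (-2)
  have hc := hl.comp_hasFDerivAt x hq
  have heq : ((-2 * ((1/8) / (1 + ‖x‖ ^ 2 / 8))) • (2 • (innerSL ℝ x)) : R2 →L[ℝ] ℝ)
      = (-4 / (8 + ‖x‖ ^ 2)) • (innerSL ℝ x) := by
    ext v
    simp only [ContinuousLinearMap.smul_apply, smul_eq_mul, nsmul_eq_mul]
    have h8 : (8:ℝ) + ‖x‖ ^ 2 ≠ 0 := by positivity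
    have h1' : (1:ℝ) + ‖x‖ ^ 2 / 8 ≠ 0 := h1.ne'
    field_simp
    push_cast; ring
  rw [← heq]
  exact hc

lemma fderiv_stdBubble_single (i : Fin 2) (y : R2) :
    fderiv ℝ stdBubble y (EuclideanSpace.single i 1) = -4 * y i / (8 + ‖y‖ ^ 2) := by
  rw [(hasFDerivAt_stdBubble y).fderiv]
  simp only [ContinuousLinearMap.smul_apply, smul_eq_mul, innerSL_apply_apply]
  rw [EuclideanSpace.inner_single_right]
  simp only [RCLike.star_def, conj_trivial, one_mul]
  ring

lemma key_fderiv (i : Fin 2) (x : R2) :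
    fderiv ℝ (fun y : R2 => -4 * y i / (8 + ‖y‖ ^ 2)) x (EuclideanSpace.single i 1)
      = -4 / (8 + ‖x‖ ^ 2) + 8 * (x i) ^ 2 / (8 + ‖x‖ ^ 2) ^ 2 := by
  have hq : HasFDerivAt (fun y : R2 => ‖y‖ ^ 2) (2 • (innerSL ℝ x)) x :=
    (hasStrictFDerivAt_norm_sq x).hasFDerivAt
  have hden : HasFDerivAt (fun y : R2 => 8 + ‖y‖ ^ 2) (2 • (innerSL ℝ x)) x := hq.const_add 8
  have h8 : (8:ℝ) + ‖x‖ ^ 2 ≠ 0 := by positivity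
  have hP : HasFDerivAt (fun y : R2 => y i) (innerSL ℝ (EuclideanSpace.single i (1:ℝ))) x := by
    have h : (fun y : R2 => y i) = fun y : R2 => innerSL ℝ (EuclideanSpace.single i (1:ℝ)) y := by
      funext y; simp [EuclideanSpace.inner_single_left]
    rw [h]; exact (innerSL ℝ (EuclideanSpace.single i (1:ℝ))).hasFDerivAt
  have hnum : HasFDerivAt (fun y : R2 => -4 * y i)
      ((-4 : ℝ) • innerSL ℝ (EuclideanSpace.single i (1:ℝ))) x := hP.const_mul (-4)
  have hinv : HasFDerivAt (fun y : R2 => (8 + ‖y‖ ^ 2)⁻¹)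
      ((-((8 + ‖x‖ ^ 2) ^ 2)⁻¹) • (2 • (innerSL ℝ x))) x :=
    (hasDerivAt_inv h8).comp_hasFDerivAt x hden
  have hmul := hnum.mul hinv
  have : fderiv ℝ (fun y : R2 => -4 * y i * (8 + ‖y‖ ^ 2)⁻¹) x
      = ((-4 * x i) • ((-((8 + ‖x‖ ^ 2) ^ 2)⁻¹) • (2 • (innerSL ℝ x)))
          + ((8 + ‖x‖ ^ 2)⁻¹) • ((-4 : ℝ) • innerSL ℝ (EuclideanSpace.single i (1:ℝ)))) :=
    hmul.fderiv
  rw [show (fun y : R2 => -4 * y i / (8 + ‖y‖ ^ 2)) = fun y : R2 => -4 * y i * (8 + ‖y‖ ^ 2)⁻¹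
    from funext fun y => div_eq_mul_inv _ _, this]
  simp only [ContinuousLinearMap.add_apply, ContinuousLinearMap.smul_apply, smul_eq_mul,
    nsmul_eq_mul, innerSL_apply_apply, Nat.cast_ofNat]
  rw [EuclideanSpace.inner_single_right, real_inner_self_eq_norm_sq]
  simp only [RCLike.star_def, conj_trivial, one_mul, EuclideanSpace.norm_single, norm_one, one_pow]
  field_simp
  ring

lemma norm_sq_eq' (x : R2) : ‖x‖ ^ 2 = x 0 ^ 2 + x 1 ^ 2 := by
  rw [EuclideanSpace.norm_eq, Real.sq_sqrt (by positivity)]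
  simp [Fin.sum_univ_two, sq_abs]

lemma lap_stdBubble (x : R2) : -lap stdBubble x = Real.exp (stdBubble x) := by
  rw [exp_stdBubble]
  unfold lap
  have hfe : ∀ i : Fin 2, (fun y : R2 => fderiv ℝ stdBubble y (EuclideanSpace.single i 1))
      = fun y : R2 => -4 * y i / (8 + ‖y‖ ^ 2) := fun i => funext (fderiv_stdBubble_single i)
  rw [Fin.sum_univ_two, hfe 0, hfe 1, key_fderiv 0 x, key_fderiv 1 x]
  have h8 : (0:ℝ) < 8 + ‖x‖ ^ 2 := by positivity
  have hn := norm_sq_eq' x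
  rw [hn] at h8 ⊢
  field_simp
  ring

lemma radial_integral : ∫ y in Ioi (0:ℝ), y ^ (2 - 1 : ℕ) • (64 / (8 + y ^ 2) ^ 2) = 4 := by
  have key : ∀ y : ℝ, HasDerivAt (fun t : ℝ => -32 * (8 + t ^ 2)⁻¹)
      (y ^ (2 - 1 : ℕ) • (64 / (8 + y ^ 2) ^ 2)) y := by
    intro y
    have hy : (0:ℝ) < 8 + y ^ 2 := by positivity
    have hd : HasDerivAt (fun t : ℝ => 8 + t ^ 2) (2 * y) y := by
      simpa using ((hasDerivAt_pow 2 y).const_add 8)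
    have hinv := (hasDerivAt_inv hy.ne').comp y hd
    have hg := hinv.const_mul (-32 : ℝ)
    refine hg.congr_deriv ?_
    simp only [smul_eq_mul, pow_one, Nat.add_one_sub_one]
    field_simp
    ring
  have hcont : ContinuousWithinAt (fun t : ℝ => -32 * (8 + t ^ 2)⁻¹) (Ici 0) 0 :=
    (Continuous.continuousWithinAt (by fun_prop (disch := intro y; positivity)))
  have htend : Tendsto (fun t : ℝ => -32 * (8 + t ^ 2)⁻¹) atTop (𝓝 0) := by
    have h1 : Tendsto (fun t : ℝ => 8 + t ^ 2) atTop atTop :=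
      tendsto_atTop_add_const_left _ 8 (tendsto_pow_atTop two_ne_zero)
    have := (tendsto_inv_atTop_zero.comp h1).const_mul (-32 : ℝ)
    simpa using this
  have := integral_Ioi_of_hasDerivAt_of_nonneg hcont (fun y _ => key y)
    (fun y hy => by have : (0:ℝ) < y := hy; positivity) htend
  rw [this]
  norm_num

lemma integral_exp_stdBubble : (∫ x : R2, Real.exp (stdBubble x)) = 8 * π := by
  have h1 : (∫ x : R2, Real.exp (stdBubble x))
      = ∫ x : R2, (fun r : ℝ => 64 / (8 + r ^ 2) ^ 2) ‖x‖ := by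
    simp_rw [exp_stdBubble]
  rw [h1, MeasureTheory.integral_fun_norm_addHaar volume (fun r : ℝ => 64 / (8 + r ^ 2) ^ 2)]
  have hdim : Module.finrank ℝ R2 = 2 := finrank_euclideanSpace_fin
  have hball : volume.real (ball (0:R2) 1) = π := by
    rw [measureReal_def, EuclideanSpace.volume_ball]
    norm_num [Real.Gamma_two, Real.sq_sqrt Real.pi_nonneg, Real.pi_nonneg]
  rw [hdim, hball]
  rw [radial_integral]
  simp
  ring

theorem stmt7 :
    ContDiff ℝ (⊤ : ℕ∞) stdBubble ∧
    (∀ x : R2, stdBubble x ≤ 0) ∧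
    stdBubble 0 = 0 ∧
    (∀ x : R2, -lap stdBubble x = Real.exp (stdBubble x)) ∧
    (∫ x : R2, Real.exp (stdBubble x)) = 8 * π := by
  refine ⟨contDiff_stdBubble, fun x => ?_, by simp [stdBubble], fun x => lap_stdBubble x,
    integral_exp_stdBubble⟩
  have h := Real.log_nonneg (le_add_of_nonneg_right (by positivity : (0:ℝ) ≤ ‖x‖ ^ 2 / 8))
  unfold stdBubble
  nlinarith [h]
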